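/- arXiv:2102.06956 — 4 statements merged into one kernel-verified Lean document; each statement's English description precedes it below -/
import Mathlib

section
/- Consequently, no 4-regular graph of girth 4 that contains a subgraph isomorphic to K₂,₃ admits a proper 4-edge-coloring in which every 4-cycle uses all four colors. -/
open SimpleGraph

def IsProperEdgeColoring {V α : Type*} (G : SimpleGraph V) (c : Sym2 V → α) : Prop :=
  ∀ ⦃e₁ e₂ : Sym2 V⦄, e₁ ∈ G.edgeSet → e₂ ∈ G.edgeSet → e₁ ≠ e₂ →
    (∃ v, v ∈ e₁ ∧ v ∈ e₂) → c e₁ ≠ c e₂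

private lemma K23_aux4 : ∀ A B C D : Fin 4, (∀ k : Fin 4, k = A ∨ k = B ∨ k = C ∨ k = D) →
    A ≠ B ∧ A ≠ C ∧ A ≠ D ∧ B ≠ C ∧ B ≠ D ∧ C ≠ D := by decide

private lemma K23_no_six : ∀ a0 b0 a1 b1 a2 b2 : Fin 4,
    ¬(a0 ≠ b0 ∧ a1 ≠ b1 ∧ a2 ≠ b2 ∧
      a0 ≠ a1 ∧ a0 ≠ b1 ∧ b0 ≠ a1 ∧ b0 ≠ b1 ∧
      a0 ≠ a2 ∧ a0 ≠ b2 ∧ b0 ≠ a2 ∧ b0 ≠ b2 ∧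
      a1 ≠ a2 ∧ a1 ≠ b2 ∧ b1 ≠ a2 ∧ b1 ≠ b2) := by decide

/-- No 4-regular graph of girth 4 containing a subgraph isomorphic to K₂,₃ admits a proper
4-edge-coloring in which every 4-cycle uses all four colors. -/
theorem K23_obstruction {V : Type*} [Fintype V] (G : SimpleGraph V) [DecidableRel G.Adj]
    (hreg : G.IsRegularOfDegree 4) (hgirth : G.girth = 4)
    (f : Fin 2 ⊕ Fin 3 → V) (hf : Function.Injective f)
    (hhom : ∀ a b, (completeBipartiteGraph (Fin 2) (Fin 3)).Adj a b → G.Adj (f a) (f b)) :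
    ¬∃ c : Sym2 V → Fin 4, IsProperEdgeColoring G c ∧
      ∀ (v : V) (w : G.Walk v v), w.IsCycle → w.length = 4 →
        ∀ i : Fin 4, ∃ e ∈ w.edges, c e = i := by
  rintro ⟨c, hc, hcyc⟩
  set u0 := f (Sum.inl 0) with hu0
  set u1 := f (Sum.inl 1) with hu1
  set v : Fin 3 → V := fun i => f (Sum.inr i) with hv
  have hadj0 : ∀ i, G.Adj u0 (v i) := fun i => hhom _ _ (by simp)
  have hadj1 : ∀ i, G.Adj u1 (v i) := fun i => hhom _ _ (by simp)
  have hne01 : u0 ≠ u1 := fun h => by simpa using hf h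
  have hne0v : ∀ i, u0 ≠ v i := fun i h => by simpa using hf h
  have hne1v : ∀ i, u1 ≠ v i := fun i h => by simpa using hf h
  have hnev : ∀ i j : Fin 3, i ≠ j → v i ≠ v j := fun i j hij h => hij (by simpa using hf h)
  -- colors of the six edges of the K₂,₃
  set a : Fin 3 → Fin 4 := fun i => c s(u0, v i) with ha
  set b : Fin 3 → Fin 4 := fun i => c s(u1, v i) with hb
  -- properness at the shared vertex v i
  have hab : ∀ i, a i ≠ b i := by
    intro i
    refine hc (G.mem_edgeSet.2 (hadj0 i)) (G.mem_edgeSet.2 (hadj1 i)) ?_ ⟨v i, by simp, by simp⟩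
    simp [Sym2.eq, Sym2.rel_iff', hne01, hne0v i, (hne1v i).symm]
  -- for i ≠ j, the 4-cycle u0 - v i - u1 - v j - u0 is rainbow
  have key : ∀ i j : Fin 3, i ≠ j →
      a i ≠ b i ∧ a i ≠ b j ∧ a i ≠ a j ∧ b i ≠ b j ∧ b i ≠ a j ∧ b j ≠ a j := by
    intro i j hij
    have h01 := hne01
    have h0va := hne0v i
    have h0vb := hne0v j
    have h1va := hne1v i
    have h1vb := hne1v j
    have hvab := hnev i j hij
    let w : G.Walk u0 u0 :=
      .cons (hadj0 i) (.cons (hadj1 i).symm (.cons (hadj1 j) (.cons (hadj0 j).symm .nil)))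
    have hwc : w.IsCycle := by
      constructor
      · constructor
        · rw [Walk.isTrail_def]
          show List.Nodup [s(u0, v i), s(v i, u1), s(u1, v j), s(v j, u0)]
          simp [Sym2.eq, Sym2.rel_iff', h01, h0va, h0vb, h1va, h1vb, hvab,
            h01.symm, h0va.symm, h0vb.symm, h1va.symm, h1vb.symm, hvab.symm]
        · simp [w]
      · show List.Nodup [v i, u1, v j, u0]
        simp [h01.symm, h0va.symm, h0vb.symm, h1va.symm, h1vb.symm, hvab, Ne.symm]
    have hwl : w.length = 4 := rfl
    have hcover : ∀ k : Fin 4,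
        k = c s(u0, v i) ∨ k = c s(v i, u1) ∨ k = c s(u1, v j) ∨ k = c s(v j, u0) := by
      intro k
      obtain ⟨e, he, hek⟩ := hcyc u0 w hwc hwl k
      have : e ∈ [s(u0, v i), s(v i, u1), s(u1, v j), s(v j, u0)] := he
      simp only [List.mem_cons, List.not_mem_nil, or_false] at this
      rcases this with h | h | h | h <;> subst h <;> [exact Or.inl hek.symm;
        exact Or.inr (Or.inl hek.symm); exact Or.inr (Or.inr (Or.inl hek.symm));
        exact Or.inr (Or.inr (Or.inr hek.symm))]
    obtain ⟨h1, h2, h3, h4, h5, h6⟩ := K23_aux4 _ _ _ _ hcover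
    rw [Sym2.eq_swap (a := v i)] at h1 h4 h5
    rw [Sym2.eq_swap (a := v j)] at h3 h5 h6
    exact ⟨h1, h2, h3, h4, h5, h6⟩
  obtain ⟨h01a, h01b, h01c, h01d, h01e, h01f⟩ := key 0 1 (by decide)
  obtain ⟨h02a, h02b, h02c, h02d, h02e, h02f⟩ := key 0 2 (by decide)
  obtain ⟨h12a, h12b, h12c, h12d, h12e, h12f⟩ := key 1 2 (by decide)
  exact K23_no_six (a 0) (b 0) (a 1) (b 1) (a 2) (b 2)
    ⟨h01a, h12a, hab 2, h01c, h01b, h01e, h01d,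
      h02c, h02b, h02e, h02d, h12c, h12b, h12e, h12d⟩
end

section
/- The hypercube Q₄ admits a proper 4-edge-coloring in which every 4-cycle uses all four colors (i.e., Q₄ is edge-girth chromatic). -/
open SimpleGraph

def cubeGraph (n : ℕ) : SimpleGraph (Fin n → ZMod 2) :=
  SimpleGraph.fromRel (fun x y => hammingDist x y = 1)

/-!
Label the directions of `Qₙ` injectively by elements `dir i` of a field `K` of characteristic 2
and fix `ω ∉ {0, 1}`. With `L x = ∑ xᵢ • dir i` and the parity `s x = ∑ xᵢ`, colour the edge from
`x` in direction `i` by `(ω + s x) * dir i + L x`; this is the restriction to edges of the symmetric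
expression `ω L(x + y) + s y * L x + s x * L y`. As `ω + s x ≠ 0`, the edges at a vertex get
distinct colours. Around the square `x, x + eᵢ, x + eᵢ + eⱼ, x + eⱼ` the colours are, up to
adding `L x`, `μ a, (μ + 1) b + a, (μ + 1) a + b, μ b` with `μ = ω + s x`, `a = dir i`,
`b = dir j`; any two of them differ by `μ (a + b)`, `(μ + 1) (a + b)` or `a + b`, and these are
nonzero. For `Q₄` take `K = 𝔽₄`, which has exactly four elements.
-/

open Finset

theorem ZMod.two_ne_iff_eq_add_one {a b : ZMod 2} : a ≠ b ↔ b = a + 1 := by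
  revert a b; decide

variable {n : ℕ}

theorem hammingDist_eq_one_iff_eq_add_single {x y : Fin n → ZMod 2} :
    hammingDist x y = 1 ↔ ∃ i, y = x + Pi.single i 1 := by
  simp only [hammingDist, card_eq_one, Finset.ext_iff, mem_filter, mem_univ, true_and,
    mem_singleton, funext_iff, Pi.add_apply]
  refine exists_congr fun i => forall_congr' fun k => ?_
  rcases eq_or_ne k i with rfl | hki
  · simp [ZMod.two_ne_iff_eq_add_one]
  · simp [hki, eq_comm]

theorem cubeGraph_adj_iff {x y : Fin n → ZMod 2} :
    (cubeGraph n).Adj x y ↔ ∃ i, y = x + Pi.single i 1 := by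
  rw [cubeGraph, fromRel_adj, hammingDist_comm y, or_self,
    ← hammingDist_eq_one_iff_eq_add_single]
  exact and_iff_right_of_imp fun h => hammingDist_pos.mp (h ▸ one_pos)

@[simp]
theorem single_add_single_eq_zero_iff {i j : Fin n} :
    (Pi.single i 1 + Pi.single j 1 : Fin n → ZMod 2) = 0 ↔ i = j := by
  refine ⟨fun h => ?_, fun h => h ▸ ZModModule.add_self _⟩
  by_contra hij
  simpa [Pi.single_apply, Ne.symm hij] using congrFun h i

theorem eq_of_single_add_single_add_single_add_single_eq_zero {p q r s : Fin n}
    (hpq : p ≠ q) (hqr : q ≠ r)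
    (h : (Pi.single p 1 + Pi.single q 1 + Pi.single r 1 + Pi.single s 1 : Fin n → ZMod 2) = 0) :
    r = p ∧ s = q := by
  have hsq : s = q := by
    by_contra hsq
    simpa [Pi.single_apply, hpq, hqr.symm, Ne.symm hsq] using congrFun h q
  subst hsq
  refine ⟨Eq.symm <| single_add_single_eq_zero_iff.mp ?_, rfl⟩
  rwa [add_right_comm _ (Pi.single r 1), add_assoc (Pi.single p 1), ZModModule.add_self,
    add_zero] at h

theorem SimpleGraph.Walk.IsCycle.edges_eq_cubeGraph_square {v : Fin n → ZMod 2}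
    {w : (cubeGraph n).Walk v v} (hw : w.IsCycle) (h4 : w.length = 4) :
    ∃ i j, i ≠ j ∧ w.edges =
      [s(v, v + Pi.single i 1), s(v + Pi.single i 1, v + Pi.single i 1 + Pi.single j 1),
        s(v + Pi.single i 1 + Pi.single j 1, v + Pi.single j 1), s(v + Pi.single j 1, v)] := by
  rcases w with _ | ⟨h₁, _ | ⟨h₂, _ | ⟨h₃, _ | ⟨h₄, _ | ⟨_, _⟩⟩⟩⟩⟩ <;> simp at h4
  simp only [cubeGraph_adj_iff] at h₁ h₂ h₃ h₄
  obtain ⟨p, rfl⟩ := h₁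
  obtain ⟨q, rfl⟩ := h₂
  obtain ⟨r, rfl⟩ := h₃
  obtain ⟨s, hs⟩ := h₄
  have hnodup := hw.support_nodup
  simp only [support_cons, add_assoc, support_nil, List.tail_cons, List.nodup_cons,
    List.mem_cons, add_right_inj, left_eq_add, single_add_single_eq_zero_iff, add_eq_left,
    Pi.single_eq_zero_iff, one_ne_zero, false_or, List.not_mem_nil, or_false,
    not_false_eq_true, List.nodup_nil, and_true] at hnodup
  obtain ⟨hqr, hpq, -⟩ := hnodup
  have hsum : (Pi.single p 1 + Pi.single q 1 + Pi.single r 1 + Pi.single s 1 : Fin n → ZMod 2)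
      = 0 := by
    simpa [add_assoc] using hs.symm
  obtain ⟨hrp, hsq⟩ := eq_of_single_add_single_add_single_add_single_eq_zero hpq hqr hsum
  subst r s
  refine ⟨p, q, hpq, ?_⟩
  simp [add_right_comm _ (Pi.single q _), add_assoc, ZModModule.add_self]

theorem isProperEdgeColoring_of_adj {V α : Type*} {G : SimpleGraph V} {c : Sym2 V → α}
    (h : ∀ v u w, G.Adj v u → G.Adj v w → u ≠ w → c s(v, u) ≠ c s(v, w)) :
    IsProperEdgeColoring G c := by
  rintro e₁ e₂ h₁ h₂ hne ⟨v, hv₁, hv₂⟩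
  obtain ⟨u, rfl⟩ := Sym2.mem_iff_exists.mp hv₁
  obtain ⟨w, rfl⟩ := Sym2.mem_iff_exists.mp hv₂
  exact h v _ _ h₁ h₂ fun heq => hne (heq ▸ rfl)

theorem IsProperEdgeColoring.comp {V α β : Type*} {G : SimpleGraph V} {c : Sym2 V → α}
    (hc : IsProperEdgeColoring G c) {f : α → β} (hf : Function.Injective f) :
    IsProperEdgeColoring G (f ∘ c) :=
  fun _ _ h₁ h₂ hne hv => hf.ne (hc h₁ h₂ hne hv)

theorem List.Nodup.mem_of_length_eq_card {α : Type*} [Fintype α] [DecidableEq α] {l : List α}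
    (hl : l.Nodup) (hlen : l.length = Fintype.card α) (a : α) : a ∈ l := by
  rw [← List.mem_toFinset, Finset.eq_univ_of_card _ ((List.toFinset_card_of_nodup hl).trans hlen)]
  exact Finset.mem_univ a

section Coloring

variable {K : Type*} [Field K] [CharP K 2]

def labelSum (dir : Fin n → K) (x : Fin n → ZMod 2) : K :=
  ∑ i, ZMod.castHom (dvd_refl 2) K (x i) * dir i

theorem labelSum_add (dir : Fin n → K) (x y : Fin n → ZMod 2) :
    labelSum dir (x + y) = labelSum dir x + labelSum dir y := by
  simp only [labelSum, Pi.add_apply, map_add, add_mul, sum_add_distrib]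

theorem labelSum_single (dir : Fin n → K) (i : Fin n) :
    labelSum dir (Pi.single i 1) = dir i := by
  simp [labelSum, Pi.single_apply]

theorem labelSum_add_single (dir : Fin n → K) (x : Fin n → ZMod 2) (i : Fin n) :
    labelSum dir (x + Pi.single i 1) = labelSum dir x + dir i := by
  rw [labelSum_add, labelSum_single]

theorem add_labelSum_one_ne_zero {ω : K} (hω₀ : ω ≠ 0) (hω₁ : ω ≠ 1) (x : Fin n → ZMod 2) :
    ω + labelSum 1 x ≠ 0 := by
  have hx : labelSum 1 x = ZMod.castHom (dvd_refl 2) K (∑ i, x i) := by simp [labelSum]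
  obtain hs | hs : ∑ i, x i = 0 ∨ ∑ i, x i = 1 := by generalize ∑ i, x i = s; revert s; decide
  · simpa [hx, hs] using hω₀
  · simpa [hx, hs, add_eq_zero_iff_eq_neg, CharTwo.neg_eq] using hω₁

theorem nodup_square_colors {μ a b : K} (hμ : μ ≠ 0) (hμ₁ : μ + 1 ≠ 0) (hab : a ≠ b) :
    [μ * a, (μ + 1) * b + a, (μ + 1) * a + b, μ * b].Nodup := by
  simp only [List.nodup_cons, List.mem_cons, List.not_mem_nil, or_false, not_or, List.nodup_nil]
  grind

def cubeEdgeColoring (ω : K) (dir : Fin n → K) : Sym2 (Fin n → ZMod 2) → K :=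
  Sym2.lift ⟨fun x y => ω * labelSum dir (x + y) + labelSum 1 y * labelSum dir x +
    labelSum 1 x * labelSum dir y, fun x y => by dsimp only; rw [add_comm x y]; ring⟩

theorem cubeEdgeColoring_mk_add_single (ω : K) (dir : Fin n → K) (x : Fin n → ZMod 2)
    (i : Fin n) :
    cubeEdgeColoring ω dir s(x, x + Pi.single i 1) =
      (ω + labelSum 1 x) * dir i + labelSum dir x := by
  simp only [cubeEdgeColoring, Sym2.lift_mk, labelSum_add, labelSum_single, Pi.one_apply]
  linear_combination ((ω + labelSum 1 x) * labelSum dir x) * CharTwo.two_eq_zero (R := K)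

variable {ω : K} {dir : Fin n → K}

theorem isProperEdgeColoring_cubeEdgeColoring (hω₀ : ω ≠ 0) (hω₁ : ω ≠ 1)
    (hdir : Function.Injective dir) :
    IsProperEdgeColoring (cubeGraph n) (cubeEdgeColoring ω dir) := by
  refine isProperEdgeColoring_of_adj fun x u w hu hw hne => ?_
  obtain ⟨i, rfl⟩ := cubeGraph_adj_iff.mp hu
  obtain ⟨j, rfl⟩ := cubeGraph_adj_iff.mp hw
  rw [cubeEdgeColoring_mk_add_single, cubeEdgeColoring_mk_add_single, Ne, add_left_inj,
    mul_right_inj' (add_labelSum_one_ne_zero hω₀ hω₁ x)]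
  exact fun h => hne (by rw [hdir h])

theorem cubeEdgeColoring_square_nodup (hω₀ : ω ≠ 0) (hω₁ : ω ≠ 1)
    (hdir : Function.Injective dir) (x : Fin n → ZMod 2) {i j : Fin n} (hij : i ≠ j) :
    [cubeEdgeColoring ω dir s(x, x + Pi.single i 1),
      cubeEdgeColoring ω dir s(x + Pi.single i 1, x + Pi.single i 1 + Pi.single j 1),
      cubeEdgeColoring ω dir s(x + Pi.single i 1 + Pi.single j 1, x + Pi.single j 1),
      cubeEdgeColoring ω dir s(x + Pi.single j 1, x)].Nodup := by
  have hswap : s(x + Pi.single i 1 + Pi.single j 1, x + Pi.single j 1) =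
      s(x + Pi.single j 1, x + Pi.single j 1 + Pi.single i 1) := by
    rw [Sym2.eq_swap, add_right_comm]
  rw [hswap, Sym2.eq_swap (a := x + Pi.single j 1) (b := x)]
  simp only [cubeEdgeColoring_mk_add_single, labelSum_add_single, Pi.one_apply]
  have hμ₁ := add_labelSum_one_ne_zero hω₀ hω₁ (x + Pi.single i 1)
  rw [labelSum_add_single, Pi.one_apply, ← add_assoc] at hμ₁
  convert (nodup_square_colors (add_labelSum_one_ne_zero hω₀ hω₁ x) hμ₁ (hdir.ne hij)).map
    (add_left_injective (labelSum dir x)) using 1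
  simp only [List.map_cons, List.map_nil, List.cons.injEq, and_true]
  exact ⟨trivial, by ring, by ring⟩

theorem nodup_map_cubeEdgeColoring_edges (hω₀ : ω ≠ 0) (hω₁ : ω ≠ 1)
    (hdir : Function.Injective dir) {v : Fin n → ZMod 2} {w : (cubeGraph n).Walk v v}
    (hw : w.IsCycle) (h4 : w.length = 4) :
    (w.edges.map (cubeEdgeColoring ω dir)).Nodup := by
  obtain ⟨i, j, hij, hedges⟩ := hw.edges_eq_cubeGraph_square h4
  rw [hedges]
  exact cubeEdgeColoring_square_nodup hω₀ hω₁ hdir v hij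

end Coloring

/-- `Q₄` admits a proper 4-edge-coloring in which every 4-cycle uses all four colors. -/
theorem Q4_edge_girth_chromatic :
    ∃ c : Sym2 (Fin 4 → ZMod 2) → Fin 4,
      IsProperEdgeColoring (cubeGraph 4) c ∧
      ∀ (v : Fin 4 → ZMod 2) (w : (cubeGraph 4).Walk v v),
        w.IsCycle → w.length = 4 → ∀ i : Fin 4, ∃ e ∈ w.edges, c e = i := by
  let E : GaloisField 2 2 ≃ Fin 4 := Finite.equivFinOfCardEq (GaloisField.card 2 2 two_ne_zero)
  obtain ⟨ω, hω₀, hω₁⟩ : ∃ ω : GaloisField 2 2, ω ≠ 0 ∧ ω ≠ 1 := by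
    obtain ⟨k, -, hk⟩ := Finset.exists_mem_notMem_of_card_lt_card
      (s := {E 0, E 1}) (t := Finset.univ) (Finset.card_le_two.trans_lt (by simp))
    exact ⟨E.symm k, fun h => hk (by simp [← h]), fun h => hk (by simp [← h])⟩
  refine ⟨E ∘ cubeEdgeColoring ω E.symm,
    (isProperEdgeColoring_cubeEdgeColoring hω₀ hω₁ E.symm.injective).comp E.injective,
    fun v w hw h4 i => ?_⟩
  have hnodup := (nodup_map_cubeEdgeColoring_edges hω₀ hω₁ E.symm.injective hw h4).map E.injective
  simpa using hnodup.mem_of_length_eq_card (by simp [h4]) i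
end

section
/- If Γ' is a finite cubic (3-regular) multigraph of girth g with a vertex-neighborhood labeling ρ, then in the triangle-replaced graph ∇(Γ') every cycle containing a non-triangle edge has length at least 2g. -/
open SimpleGraph

/-- The triangle-replaced graph `∇(Γ')` of a cubic graph with respect to a
vertex-neighborhood labeling `ρ`: each vertex `u` is replaced by a triangle
`{(u,1),(u,2),(u,3)}`, and each edge `uw` of `Γ'` becomes the non-triangle edge
between `(u, ρ u w)` and `(w, ρ w u)`. -/
def nabla {V : Type*} (G : SimpleGraph V) (ρ : V → V → Fin 3) : SimpleGraph (V × Fin 3) :=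
  SimpleGraph.fromRel (fun x y =>
    x.1 = y.1 ∨ (G.Adj x.1 y.1 ∧ ρ x.1 y.1 = x.2 ∧ ρ y.1 x.1 = y.2))

/-!
Contracting every triangle of `∇(Γ')` maps a cycle `C` of `∇(Γ')` to a closed walk in `Γ'` whose
edges are the non-triangle edges of `C`. It is a trail, since a non-triangle edge is determined by
its image, and it is nonempty when `C` uses a non-triangle edge, so it has at least `g` edges.
Since every vertex of `∇(Γ')` lies on exactly one non-triangle edge, the non-triangle edges of `C`
have pairwise distinct endpoints, so `C` has at least twice as many vertices as non-triangle edges.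
-/

namespace SimpleGraph.Walk

variable {W V : Type*} {H : SimpleGraph W} {G : SimpleGraph V} [DecidableEq V] (f : W → V)
  (hf : ∀ ⦃a b⦄, H.Adj a b → f a ≠ f b → G.Adj (f a) (f b))

def collapse : ∀ {x y : W}, H.Walk x y → G.Walk (f x) (f y)
  | _, _, nil => nil
  | x, _, cons (v := b) h p =>
    if hxb : f x = f b then (collapse p).copy hxb.symm rfl else cons (hf h hxb) (collapse p)

theorem edges_collapse {x y : W} (p : H.Walk x y) :
    (p.collapse f hf).edges =
      (p.darts.filter fun d => f d.fst ≠ f d.snd).map fun d => s(f d.fst, f d.snd) := by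
  induction p with
  | nil => rfl
  | @cons a b y h p ih =>
    by_cases hab : f a = f b <;> simp [collapse, hab, ih]

theorem length_collapse {x y : W} (p : H.Walk x y) :
    (p.collapse f hf).length = (p.darts.filter fun d => f d.fst ≠ f d.snd).length := by
  rw [← length_edges, edges_collapse, List.length_map]

theorem mem_edges_collapse {x y a b : W} {p : H.Walk x y} (he : s(a, b) ∈ p.edges)
    (hab : f a ≠ f b) : s(f a, f b) ∈ (p.collapse f hf).edges := by
  obtain ⟨d, hd, hde⟩ := List.mem_map.mp he
  rw [edges_collapse]
  rcases Sym2.eq_iff.mp hde with ⟨rfl, rfl⟩ | ⟨rfl, rfl⟩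
  · exact List.mem_map_of_mem (List.mem_filter.mpr ⟨hd, by simpa using hab⟩)
  · rw [Sym2.eq_swap]
    exact List.mem_map_of_mem (List.mem_filter.mpr ⟨hd, by simpa using hab.symm⟩)

theorem IsTrail.collapse {x y : W} {p : H.Walk x y} (hp : p.IsTrail)
    (hinj : ∀ ⦃a b a' b'⦄, H.Adj a b → H.Adj a' b' → f a ≠ f b →
      s(f a, f b) = s(f a', f b') → s(a, b) = s(a', b')) :
    (p.collapse f hf).IsTrail := by
  rw [isTrail_def, edges_collapse]
  have hedges : (p.darts.map Dart.edge).Nodup := hp.edges_nodup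
  refine (hedges.of_map _).filter _ |>.map_on fun d hd d' hd' hdd' => ?_
  rw [List.mem_filter, decide_eq_true_iff] at hd hd'
  exact List.inj_on_of_nodup_map hedges hd.1 hd'.1 (hinj d.adj d'.adj hd.2 hdd')

end SimpleGraph.Walk

namespace SimpleGraph.Walk.IsCycle

variable {V : Type*} {G : SimpleGraph V} {u : V} {c : G.Walk u u}

theorem two_mul_length_le_of_sublist_darts (hc : c.IsCycle) {S : List G.Dart}
    (hS : S.Sublist c.darts) (hdisj : ∀ d ∈ S, ∀ d' ∈ S, d.fst ≠ d'.snd) :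
    2 * S.length ≤ c.length := by
  have hfst : (S.map (·.fst)).Nodup := by
    refine (hS.map _).nodup ?_
    rw [map_fst_darts]
    exact hc.nodup_dropLast_support
  have hsnd : (S.map (·.snd)).Nodup := by
    refine (hS.map _).nodup ?_
    rw [map_snd_darts]
    exact hc.support_nodup
  have hends : (S.map (·.fst) ++ S.map (·.snd)).Nodup := by
    refine hfst.append hsnd fun a ha ha' => ?_
    obtain ⟨d, hd, rfl⟩ := List.mem_map.mp ha
    obtain ⟨d', hd', hd'd⟩ := List.mem_map.mp ha'
    exact hdisj d hd d' hd' hd'd.symm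
  have hsub : S.map (·.fst) ++ S.map (·.snd) ⊆ c.support.tail := by
    refine List.append_subset.mpr ⟨fun a ha => ?_, fun a ha => ?_⟩
    · rw [c.tail_support_perm_dropLast_support.mem_iff, ← map_fst_darts]
      exact (hS.map _).subset ha
    · rw [← map_snd_darts]
      exact (hS.map _).subset ha
  calc 2 * S.length = (S.map (·.fst) ++ S.map (·.snd)).length := by simp [two_mul]
    _ ≤ c.support.tail.length := (hends.subperm hsub).length_le
    _ = c.length := by simp

end SimpleGraph.Walk.IsCycle

section Nabla

variable {V : Type*} {G : SimpleGraph V} {ρ : V → V → Fin 3}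

theorem nabla_adj_of_fst_ne {a b : V × Fin 3} (h : (nabla G ρ).Adj a b) (hab : a.1 ≠ b.1) :
    G.Adj a.1 b.1 ∧ a.2 = ρ a.1 b.1 ∧ b.2 = ρ b.1 a.1 := by
  rw [nabla, fromRel_adj] at h
  obtain ⟨-, (h | ⟨hG, ha, hb⟩) | (h | ⟨hG, hb, ha⟩)⟩ := h
  · exact absurd h hab
  · exact ⟨hG, ha.symm, hb.symm⟩
  · exact absurd h.symm hab
  · exact ⟨hG.symm, ha.symm, hb.symm⟩

theorem nabla_edge_eq_of_map_fst_eq ⦃a b a' b' : V × Fin 3⦄ (h : (nabla G ρ).Adj a b)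
    (h' : (nabla G ρ).Adj a' b') (hab : a.1 ≠ b.1) (he : s(a.1, b.1) = s(a'.1, b'.1)) :
    s(a, b) = s(a', b') := by
  obtain ⟨-, ha, hb⟩ := nabla_adj_of_fst_ne h hab
  rcases Sym2.eq_iff.mp he with ⟨h1, h2⟩ | ⟨h1, h2⟩
  · obtain ⟨-, ha', hb'⟩ := nabla_adj_of_fst_ne h' (h1 ▸ h2 ▸ hab)
    rw [Sym2.eq_iff]
    left
    exact ⟨Prod.ext h1 (by rw [ha, ha', h1, h2]), Prod.ext h2 (by rw [hb, hb', h1, h2])⟩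
  · obtain ⟨-, ha', hb'⟩ := nabla_adj_of_fst_ne h' (h1 ▸ h2 ▸ hab.symm)
    rw [Sym2.eq_iff]
    right
    exact ⟨Prod.ext h1 (by rw [ha, hb', h1, h2]), Prod.ext h2 (by rw [hb, ha', h1, h2])⟩

theorem eq_of_nabla_adj_of_fst_ne
    (hρ : ∀ u v w, G.Adj u v → G.Adj u w → v ≠ w → ρ u v ≠ ρ u w) {a b b' : V × Fin 3}
    (h : (nabla G ρ).Adj a b) (hab : a.1 ≠ b.1) (h' : (nabla G ρ).Adj a b')
    (hab' : a.1 ≠ b'.1) : b = b' := by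
  obtain ⟨hG, ha, hb⟩ := nabla_adj_of_fst_ne h hab
  obtain ⟨hG', ha', hb'⟩ := nabla_adj_of_fst_ne h' hab'
  have h1 : b.1 = b'.1 := by
    by_contra hne
    exact hρ _ _ _ hG hG' hne (ha ▸ ha')
  exact Prod.ext h1 (by rw [hb, hb', h1])

namespace SimpleGraph.Walk

theorem IsTrail.nabla_fst_ne_snd
    (hρ : ∀ u v w, G.Adj u v → G.Adj u w → v ≠ w → ρ u v ≠ ρ u w) {x y : V × Fin 3}
    {p : (nabla G ρ).Walk x y} (hp : p.IsTrail) {d d' : (nabla G ρ).Dart} (hd : d ∈ p.darts)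
    (hd' : d' ∈ p.darts) (hdc : d.fst.1 ≠ d.snd.1) (hdc' : d'.fst.1 ≠ d'.snd.1) :
    d.fst ≠ d'.snd := by
  intro hdd'
  have hsnd : d.snd = d'.fst :=
    eq_of_nabla_adj_of_fst_ne hρ d.adj hdc (hdd' ▸ d'.adj.symm) (hdd' ▸ hdc'.symm)
  have hedge : d.edge = d'.edge := by
    change s(d.fst, d.snd) = s(d'.fst, d'.snd)
    rw [hdd', hsnd, Sym2.eq_swap]
  obtain rfl : d = d' := List.inj_on_of_nodup_map hp.edges_nodup hd hd' hedge
  exact d.adj.ne (hdd'.trans rfl)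

theorem IsCycle.two_mul_length_filter_fst_ne_le
    (hρ : ∀ u v w, G.Adj u v → G.Adj u w → v ≠ w → ρ u v ≠ ρ u w) [DecidableEq V]
    {x : V × Fin 3} {c : (nabla G ρ).Walk x x} (hc : c.IsCycle) :
    2 * (c.darts.filter fun d => d.fst.1 ≠ d.snd.1).length ≤ c.length := by
  refine hc.two_mul_length_le_of_sublist_darts List.filter_sublist fun d hd d' hd' => ?_
  rw [List.mem_filter, decide_eq_true_iff] at hd hd'
  exact hc.isTrail.nabla_fst_ne_snd hρ hd.1 hd'.1 hd.2 hd'.2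

end SimpleGraph.Walk

end Nabla

theorem nabla_cycle_through_nontriangle_edge_long_general {V : Type*}
    (G : SimpleGraph V) (g : ℕ)
    (hgirth : G.girth = g)
    (ρ : V → V → Fin 3)
    (hρ : ∀ u v w, G.Adj u v → G.Adj u w → v ≠ w → ρ u v ≠ ρ u w)
    (x : V × Fin 3) (c : (nabla G ρ).Walk x x) (hc : c.IsCycle)
    (he : ∃ e ∈ c.edges, ∃ (u w : V) (i j : Fin 3), u ≠ w ∧ e = s((u, i), (w, j))) :
    2 * g ≤ c.length := by
  classical
  obtain ⟨-, hec, u, w, i, j, huw, rfl⟩ := he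
  have hf : ∀ ⦃a b : V × Fin 3⦄, (nabla G ρ).Adj a b → a.1 ≠ b.1 → G.Adj a.1 b.1 :=
    fun _ _ h hab => (nabla_adj_of_fst_ne h hab).1
  have hmem : s(u, w) ∈ (c.collapse Prod.fst hf).edges := Walk.mem_edges_collapse _ hf hec huw
  have hcircuit : (c.collapse Prod.fst hf).IsCircuit := by
    refine ⟨hc.isTrail.collapse _ hf nabla_edge_eq_of_map_fst_eq, ?_⟩
    exact fun hnil => by simp [hnil] at hmem
  rw [← hgirth]
  calc 2 * G.girth ≤ 2 * (c.collapse Prod.fst hf).length :=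
        Nat.mul_le_mul_left 2 hcircuit.girth_le_length
    _ = 2 * (c.darts.filter fun d => d.fst.1 ≠ d.snd.1).length := by rw [Walk.length_collapse]
    _ ≤ c.length := hc.two_mul_length_filter_fst_ne_le hρ

/-- In the triangle-replaced graph of a cubic graph of girth `g`, every cycle containing a
non-triangle edge has length at least `2g`. -/
theorem nabla_cycle_through_nontriangle_edge_long {V : Type*} [Fintype V]
    (G : SimpleGraph V) [DecidableRel G.Adj] (g : ℕ)
    (hcubic : G.IsRegularOfDegree 3) (hgirth : G.girth = g)
    (ρ : V → V → Fin 3)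
    (hρ : ∀ u v w, G.Adj u v → G.Adj u w → v ≠ w → ρ u v ≠ ρ u w)
    (x : V × Fin 3) (c : (nabla G ρ).Walk x x) (hc : c.IsCycle)
    (he : ∃ e ∈ c.edges, ∃ (u w : V) (i j : Fin 3), u ≠ w ∧ e = s((u, i), (w, j))) :
    2 * g ≤ c.length :=
  nabla_cycle_through_nontriangle_edge_long_general G g hgirth ρ hρ x c hc he
end

section
/- In the wreath graph W(n,2) = Cₙ[complement of K₂] for n > 4, every edge lies on exactly 5 four-cycles; i.e., W(n,2) is girth-regular with signature (5,5,5,5). -/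
open SimpleGraph

/-- The wreath graph `W(n,2) = Cₙ[K₂ᶜ]`: vertex set `ZMod n × Fin 2`, with `(i,a)` adjacent
to `(i±1,b)` for all `a, b`. -/
def wreathGraph (n : ℕ) : SimpleGraph (ZMod n × Fin 2) :=
  SimpleGraph.fromRel (fun x y => x.1 + 1 = y.1)

def cycleSubgraphs {V : Type*} (G : SimpleGraph V) (g : ℕ) : Set G.Subgraph :=
  {C | ∃ (v : V) (w : G.Walk v v), w.IsCycle ∧ w.length = g ∧ C = w.toSubgraph}

set_option linter.unreachableTactic false
set_option linter.unusedTactic false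

section Aux
variable {n : ℕ}

section cyc
variable {V : Type*} {G : SimpleGraph V} {a b c d a' b' c' d' : V}

def cyc4 (h1 : G.Adj a b) (h2 : G.Adj b c) (h3 : G.Adj c d) (h4 : G.Adj d a) : G.Walk a a :=
  .cons h1 (.cons h2 (.cons h3 h4.toWalk))

lemma cyc4_isCycle (h1 : G.Adj a b) (h2 : G.Adj b c) (h3 : G.Adj c d) (h4 : G.Adj d a)
    (hac : a ≠ c) (hbd : b ≠ d) : (cyc4 h1 h2 h3 h4).IsCycle := by
  have hab := h1.ne
  have hbc := h2.ne
  have hcd := h3.ne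
  have hda := h4.ne
  constructor
  · constructor
    · constructor
      simp only [cyc4, Walk.edges_cons, Adj.toWalk, Walk.edges_nil]
      simp [Sym2.eq_iff]
      aesop
    · simp [cyc4]
  · simp only [cyc4, Adj.toWalk, Walk.support_cons]
    simp
    aesop

lemma cyc4_verts (h1 : G.Adj a b) (h2 : G.Adj b c) (h3 : G.Adj c d) (h4 : G.Adj d a) :
    (cyc4 h1 h2 h3 h4).toSubgraph.verts = {a, b, c, d} := by
  ext x
  rw [Walk.mem_verts_toSubgraph]
  simp only [cyc4, Adj.toWalk, Walk.support_cons, List.mem_cons]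
  simp [Set.mem_insert_iff]
  tauto

lemma cyc4_adj (h1 : G.Adj a b) (h2 : G.Adj b c) (h3 : G.Adj c d) (h4 : G.Adj d a) {x y : V} :
    (cyc4 h1 h2 h3 h4).toSubgraph.Adj x y ↔
      s(x,y) = s(a,b) ∨ s(x,y) = s(b,c) ∨ s(x,y) = s(c,d) ∨ s(x,y) = s(d,a) := by
  simp only [cyc4, Walk.toSubgraph, Adj.toWalk, Subgraph.sup_adj, subgraphOfAdj_adj,
    singletonSubgraph_adj, Pi.bot_apply]
  rw [eq_comm (a := s(a,b)), eq_comm (a := s(b,c)), eq_comm (a := s(c,d)), eq_comm (a := s(d,a))]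
  simp

lemma cyc4_edgeSet (h1 : G.Adj a b) (h2 : G.Adj b c) (h3 : G.Adj c d) (h4 : G.Adj d a)
    {e : Sym2 V} :
    e ∈ (cyc4 h1 h2 h3 h4).toSubgraph.edgeSet ↔
      e = s(a,b) ∨ e = s(b,c) ∨ e = s(c,d) ∨ e = s(d,a) := by
  induction e with
  | _ x y => rw [Subgraph.mem_edgeSet]; exact cyc4_adj h1 h2 h3 h4

lemma cyc4_subgraph_ext {h1 : G.Adj a b} {h2 : G.Adj b c} {h3 : G.Adj c d} {h4 : G.Adj d a}
    {g1 : G.Adj a' b'} {g2 : G.Adj b' c'} {g3 : G.Adj c' d'} {g4 : G.Adj d' a'}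
    (hv : ∀ z : V, z = a ∨ z = b ∨ z = c ∨ z = d ↔ (z = a' ∨ z = b' ∨ z = c' ∨ z = d'))
    (he : ∀ x y : V,
      (s(x,y) = s(a,b) ∨ s(x,y) = s(b,c) ∨ s(x,y) = s(c,d) ∨ s(x,y) = s(d,a)) ↔
      (s(x,y) = s(a',b') ∨ s(x,y) = s(b',c') ∨ s(x,y) = s(c',d') ∨ s(x,y) = s(d',a'))) :
    (cyc4 h1 h2 h3 h4).toSubgraph = (cyc4 g1 g2 g3 g4).toSubgraph := by
  apply Subgraph.ext
  · rw [cyc4_verts, cyc4_verts]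
    ext z
    simp only [Set.mem_insert_iff, Set.mem_singleton_iff]
    exact hv z
  · ext x y
    rw [cyc4_adj, cyc4_adj]
    exact he x y
end cyc

section wreath

lemma wr_cast_ne (hn : 4 < n) {k : ℕ} (h1 : 0 < k) (h2 : k ≤ 4) : (k : ZMod n) ≠ 0 := by
  haveI : NeZero n := ⟨by omega⟩
  intro h
  rw [ZMod.natCast_eq_zero_iff] at h
  exact absurd (Nat.le_of_dvd h1 h) (by omega)

lemma wr_one_ne (hn : 4 < n) : (1 : ZMod n) ≠ 0 := by
  intro h; apply wr_cast_ne hn (k := 1) (by norm_num) (by norm_num); push_cast; exact h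

lemma wr_two_ne (hn : 4 < n) : (2 : ZMod n) ≠ 0 := by
  intro h; apply wr_cast_ne hn (k := 2) (by norm_num) (by norm_num); push_cast; exact h

lemma wr_three_ne (hn : 4 < n) : (3 : ZMod n) ≠ 0 := by
  intro h; apply wr_cast_ne hn (k := 3) (by norm_num) (by norm_num); push_cast; exact h

lemma wr_four_ne (hn : 4 < n) : (4 : ZMod n) ≠ 0 := by
  intro h; apply wr_cast_ne hn (k := 4) (by norm_num) (by norm_num); push_cast; exact h

lemma wr_adj_iff (hn : 4 < n) {x y : ZMod n × Fin 2} :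
    (wreathGraph n).Adj x y ↔ (x.1 + 1 = y.1 ∨ y.1 + 1 = x.1) := by
  constructor
  · rintro ⟨-, h⟩; exact h
  · intro h
    refine ⟨?_, h⟩
    rintro rfl
    rcases h with h | h <;>
      exact wr_one_ne hn (by nth_rewrite 2 [← add_zero x.1] at h; exact add_left_cancel h)

lemma wadj (hn : 4 < n) {x y : ZMod n × Fin 2} (h : x.1 + 1 = y.1) : (wreathGraph n).Adj x y :=
  (wr_adj_iff hn).2 (Or.inl h)

lemma wadj' (hn : 4 < n) {x y : ZMod n × Fin 2} (h : y.1 + 1 = x.1) : (wreathGraph n).Adj x y :=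
  (wr_adj_iff hn).2 (Or.inr h)

/-- type A 4-cycle: the K_{2,2} between columns j and j+1 -/
def SA (hn : 4 < n) (j : ZMod n) : (wreathGraph n).Subgraph :=
  (cyc4 (a := (j,0)) (b := (j+1,0)) (c := (j,1)) (d := (j+1,1))
    (wadj hn rfl) (wadj' hn rfl) (wadj hn rfl) (wadj' hn rfl)).toSubgraph

/-- type B 4-cycle: (j,s) - (j+1,0) - (j+2,t) - (j+1,1) - (j,s) -/
def SB (hn : 4 < n) (j : ZMod n) (s t : Fin 2) : (wreathGraph n).Subgraph :=
  (cyc4 (a := (j,s)) (b := (j+1,0)) (c := (j+2,t)) (d := (j+1,1))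
    (wadj hn rfl) (wadj hn (by show j+1+1 = j+2; ring)) (wadj' hn (by show j+1+1 = j+2; ring))
    (wadj' hn rfl)).toSubgraph
end wreath

lemma cyc4_len {V : Type*} {G : SimpleGraph V} {a b c d : V}
    (h1 : G.Adj a b) (h2 : G.Adj b c) (h3 : G.Adj c d) (h4 : G.Adj d a) :
    (cyc4 h1 h2 h3 h4).length = 4 := rfl

lemma fin2 (x : Fin 2) : x = 0 ∨ x = 1 := by omega

lemma spec_P1 (hn : 4 < n) {j k : ZMod n} (hk : k = j + 1) {x0 x1 x2 x3 : Fin 2}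
    (h02 : x0 ≠ x2) (h13 : x1 ≠ x3)
    {h1 : (wreathGraph n).Adj (j,x0) (k,x1)} {h2 : (wreathGraph n).Adj (k,x1) (j,x2)}
    {h3 : (wreathGraph n).Adj (j,x2) (k,x3)} {h4 : (wreathGraph n).Adj (k,x3) (j,x0)} :
    (cyc4 h1 h2 h3 h4).toSubgraph = SA hn j := by
  subst hk
  unfold SA
  rcases fin2 x0 with rfl|rfl <;> rcases fin2 x1 with rfl|rfl <;>
    rcases fin2 x2 with rfl|rfl <;> rcases fin2 x3 with rfl|rfl <;>
    first
      | exact absurd rfl h02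
      | exact absurd rfl h13
      | (apply cyc4_subgraph_ext <;> intros <;> (try simp only [Sym2.eq_iff]) <;> itauto)

lemma spec_P2 (hn : 4 < n) {j k : ZMod n} (hk : k = j + 1) {x0 x1 x2 x3 : Fin 2}
    (h02 : x0 ≠ x2) (h13 : x1 ≠ x3)
    {h1 : (wreathGraph n).Adj (k,x0) (j,x1)} {h2 : (wreathGraph n).Adj (j,x1) (k,x2)}
    {h3 : (wreathGraph n).Adj (k,x2) (j,x3)} {h4 : (wreathGraph n).Adj (j,x3) (k,x0)} :
    (cyc4 h1 h2 h3 h4).toSubgraph = SA hn j := by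
  subst hk
  unfold SA
  rcases fin2 x0 with rfl|rfl <;> rcases fin2 x1 with rfl|rfl <;>
    rcases fin2 x2 with rfl|rfl <;> rcases fin2 x3 with rfl|rfl <;>
    first
      | exact absurd rfl h02
      | exact absurd rfl h13
      | (apply cyc4_subgraph_ext <;> intros <;> (try simp only [Sym2.eq_iff]) <;> itauto)

lemma spec_P3 (hn : 4 < n) {j k l : ZMod n} (hk : k = j + 1) (hl : l = j + 2)
    {x0 x1 x2 x3 : Fin 2} (h13 : x1 ≠ x3)
    {h1 : (wreathGraph n).Adj (j,x0) (k,x1)} {h2 : (wreathGraph n).Adj (k,x1) (l,x2)}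
    {h3 : (wreathGraph n).Adj (l,x2) (k,x3)} {h4 : (wreathGraph n).Adj (k,x3) (j,x0)} :
    (cyc4 h1 h2 h3 h4).toSubgraph = SB hn j x0 x2 := by
  subst hk; subst hl
  unfold SB
  rcases fin2 x1 with rfl|rfl <;> rcases fin2 x3 with rfl|rfl <;>
    first
      | exact absurd rfl h13
      | (apply cyc4_subgraph_ext <;> intros <;> (try simp only [Sym2.eq_iff]) <;> itauto)

lemma spec_P4 (hn : 4 < n) {j k l : ZMod n} (hk : k = j + 1) (hl : l = j + 2)
    {x0 x1 x2 x3 : Fin 2} (h02 : x0 ≠ x2)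
    {h1 : (wreathGraph n).Adj (k,x0) (l,x1)} {h2 : (wreathGraph n).Adj (l,x1) (k,x2)}
    {h3 : (wreathGraph n).Adj (k,x2) (j,x3)} {h4 : (wreathGraph n).Adj (j,x3) (k,x0)} :
    (cyc4 h1 h2 h3 h4).toSubgraph = SB hn j x3 x1 := by
  subst hk; subst hl
  unfold SB
  rcases fin2 x0 with rfl|rfl <;> rcases fin2 x2 with rfl|rfl <;>
    first
      | exact absurd rfl h02
      | (apply cyc4_subgraph_ext <;> intros <;> (try simp only [Sym2.eq_iff]) <;> itauto)

lemma spec_P5 (hn : 4 < n) {j k l : ZMod n} (hk : k = j + 1) (hl : l = j + 2)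
    {x0 x1 x2 x3 : Fin 2} (h02 : x0 ≠ x2)
    {h1 : (wreathGraph n).Adj (k,x0) (j,x1)} {h2 : (wreathGraph n).Adj (j,x1) (k,x2)}
    {h3 : (wreathGraph n).Adj (k,x2) (l,x3)} {h4 : (wreathGraph n).Adj (l,x3) (k,x0)} :
    (cyc4 h1 h2 h3 h4).toSubgraph = SB hn j x1 x3 := by
  subst hk; subst hl
  unfold SB
  rcases fin2 x0 with rfl|rfl <;> rcases fin2 x2 with rfl|rfl <;>
    first
      | exact absurd rfl h02
      | (apply cyc4_subgraph_ext <;> intros <;> (try simp only [Sym2.eq_iff]) <;> itauto)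

lemma spec_P6 (hn : 4 < n) {j k l : ZMod n} (hk : k = j + 1) (hl : l = j + 2)
    {x0 x1 x2 x3 : Fin 2} (h13 : x1 ≠ x3)
    {h1 : (wreathGraph n).Adj (l,x0) (k,x1)} {h2 : (wreathGraph n).Adj (k,x1) (j,x2)}
    {h3 : (wreathGraph n).Adj (j,x2) (k,x3)} {h4 : (wreathGraph n).Adj (k,x3) (l,x0)} :
    (cyc4 h1 h2 h3 h4).toSubgraph = SB hn j x2 x0 := by
  subst hk; subst hl
  unfold SB
  rcases fin2 x1 with rfl|rfl <;> rcases fin2 x3 with rfl|rfl <;>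
    first
      | exact absurd rfl h13
      | (apply cyc4_subgraph_ext <;> intros <;> (try simp only [Sym2.eq_iff]) <;> itauto)

lemma wr_classify (hn : 4 < n) {C : (wreathGraph n).Subgraph}
    (hC : C ∈ cycleSubgraphs (wreathGraph n) 4) :
    (∃ j, C = SA hn j) ∨ (∃ j s t, C = SB hn j s t) := by
  obtain ⟨v, w, hcyc, hlen, rfl⟩ := hC
  obtain ⟨j0, x0⟩ := v
  cases w with
  | nil => simp at hlen
  | cons h1 w =>
  rename_i v1
  obtain ⟨j1, x1⟩ := v1
  cases w with
  | nil => simp at hlen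
  | cons h2 w =>
  rename_i v2
  obtain ⟨j2, x2⟩ := v2
  cases w with
  | nil => simp at hlen
  | cons h3 w =>
  rename_i v3
  obtain ⟨j3, x3⟩ := v3
  cases w with
  | nil => simp at hlen
  | cons h4 w =>
  cases w with
  | cons h5 w => simp only [Walk.length_cons] at hlen; omega
  | nil =>
  have hd := hcyc.2
  simp at hd
  obtain ⟨⟨d12, d13, d10⟩, ⟨d23, d20⟩, d30⟩ := hd
  rcases (wr_adj_iff hn).1 h1 with f1|f1 <;> dsimp only at f1 <;>
  rcases (wr_adj_iff hn).1 h2 with f2|f2 <;> dsimp only at f2 <;>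
  rcases (wr_adj_iff hn).1 h3 with f3|f3 <;> dsimp only at f3 <;>
  rcases (wr_adj_iff hn).1 h4 with f4|f4 <;> dsimp only at f4 <;>
  first
    | exact absurd (by linear_combination f1+f2+f3+f4) (wr_four_ne hn)
    | exact absurd (by linear_combination f1+f2+f3-f4) (wr_two_ne hn)
    | exact absurd (by linear_combination f1+f2-f3+f4) (wr_two_ne hn)
    | exact absurd (by linear_combination f1-f2+f3+f4) (wr_two_ne hn)
    | exact absurd (by linear_combination -f1+f2+f3+f4) (wr_two_ne hn)
    | -- P1 : (+,-,+,-)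
      (subst f1
       have hj : j2 = j0 := by linear_combination f2
       subst hj
       subst f3
       exact Or.inl ⟨_, spec_P1 hn rfl (Ne.symm (d20 rfl)) (d13 rfl)⟩)
    | -- P2 : (-,+,-,+)
      (subst f1
       subst f2
       have hj : j3 = j1 := by linear_combination f3
       subst hj
       exact Or.inl ⟨_, spec_P2 hn rfl (Ne.symm (d20 rfl)) (d13 rfl)⟩)
    | -- P3 : (+,+,-,-)
      (subst f1
       subst f2
       have hj : j3 = j0 + 1 := by linear_combination f3
       subst hj
       exact Or.inr ⟨_, _, _, spec_P3 hn rfl (by ring) (d13 rfl)⟩)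
    | -- P4 : (+,-,-,+)
      (subst f4
       subst f1
       have hj : j2 = j3 + 1 := by linear_combination f2
       subst hj
       exact Or.inr ⟨_, _, _, spec_P4 hn rfl (by ring) (Ne.symm (d20 rfl))⟩)
    | -- P5 : (-,+,+,-)
      (subst f1
       subst f2
       subst f3
       exact Or.inr ⟨_, _, _, spec_P5 hn rfl (by ring) (Ne.symm (d20 rfl))⟩)
    | -- P6 : (-,-,+,+)
      (subst f2
       subst f1
       subst f3
       exact Or.inr ⟨_, _, _, spec_P6 hn rfl (by ring) (d13 rfl)⟩)

lemma SA_verts (hn : 4 < n) (j : ZMod n) :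
    (SA hn j).verts = {(j,0), (j+1,0), (j,1), (j+1,1)} := cyc4_verts _ _ _ _

lemma SB_verts (hn : 4 < n) (j : ZMod n) (s t : Fin 2) :
    (SB hn j s t).verts = {(j,s), (j+1,0), (j+2,t), (j+1,1)} := cyc4_verts _ _ _ _

lemma SA_edge (hn : 4 < n) (j : ZMod n) {e : Sym2 (ZMod n × Fin 2)} :
    e ∈ (SA hn j).edgeSet ↔ e = s((j,0),(j+1,0)) ∨ e = s((j+1,0),(j,1)) ∨
      e = s((j,1),(j+1,1)) ∨ e = s((j+1,1),(j,0)) := cyc4_edgeSet _ _ _ _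

lemma SB_edge (hn : 4 < n) (j : ZMod n) (s t : Fin 2) {e : Sym2 (ZMod n × Fin 2)} :
    e ∈ (SB hn j s t).edgeSet ↔ e = s((j,s),(j+1,0)) ∨ e = s((j+1,0),(j+2,t)) ∨
      e = s((j+2,t),(j+1,1)) ∨ e = s((j+1,1),(j,s)) := cyc4_edgeSet _ _ _ _

lemma SA_mem (hn : 4 < n) (j : ZMod n) : SA hn j ∈ cycleSubgraphs (wreathGraph n) 4 :=
  ⟨(j,0), _, cyc4_isCycle _ _ _ _ (by simp) (by simp), cyc4_len _ _ _ _, rfl⟩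

lemma SB_mem (hn : 4 < n) (j : ZMod n) (s t : Fin 2) :
    SB hn j s t ∈ cycleSubgraphs (wreathGraph n) 4 :=
  ⟨(j,s), _, cyc4_isCycle _ _ _ _
    (fun h => wr_two_ne hn (by linear_combination -(Prod.ext_iff.1 h).1)) (by simp), cyc4_len _ _ _ _, rfl⟩

lemma SA_ne_SB (hn : 4 < n) (j j' : ZMod n) (s t : Fin 2) : SA hn j ≠ SB hn j' s t := by
  intro h
  have h1 : (j',s) ∈ (SA hn j).verts := by rw [h, SB_verts]; simp
  have h2 : (j'+2,t) ∈ (SA hn j).verts := by rw [h, SB_verts]; simp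
  rw [SA_verts] at h1 h2
  simp only [Set.mem_insert_iff, Set.mem_singleton_iff, Prod.mk.injEq] at h1 h2
  rcases h1 with ⟨e1,-⟩|⟨e1,-⟩|⟨e1,-⟩|⟨e1,-⟩ <;> rcases h2 with ⟨e2,-⟩|⟨e2,-⟩|⟨e2,-⟩|⟨e2,-⟩ <;>
    first
      | exact wr_one_ne hn (by linear_combination e2 - e1)
      | exact wr_one_ne hn (by linear_combination e1 - e2)
      | exact wr_two_ne hn (by linear_combination e2 - e1)
      | exact wr_two_ne hn (by linear_combination e1 - e2)
      | exact wr_three_ne hn (by linear_combination e2 - e1)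
      | exact wr_three_ne hn (by linear_combination e1 - e2)

lemma SB_ne_tt (hn : 4 < n) (j : ZMod n) (s : Fin 2) : SB hn j s 0 ≠ SB hn j s 1 := by
  intro h
  have h1 : (j+2,(0:Fin 2)) ∈ (SB hn j s 1).verts := by rw [← h, SB_verts]; simp
  rw [SB_verts] at h1
  simp only [Set.mem_insert_iff, Set.mem_singleton_iff, Prod.mk.injEq] at h1
  rcases h1 with ⟨e1,e2⟩|⟨e1,e2⟩|⟨e1,e2⟩|⟨e1,e2⟩ <;>
    first
      | exact absurd e2 (by decide)
      | exact wr_one_ne hn (by linear_combination e1)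
      | exact wr_one_ne hn (by linear_combination -e1)
      | exact wr_two_ne hn (by linear_combination e1)
      | exact wr_two_ne hn (by linear_combination -e1)

lemma SB_ne_ss (hn : 4 < n) (j : ZMod n) (t t' : Fin 2) : SB hn j 0 t ≠ SB hn j 1 t' := by
  intro h
  have h1 : (j,(0:Fin 2)) ∈ (SB hn j 1 t').verts := by rw [← h, SB_verts]; simp
  rw [SB_verts] at h1
  simp only [Set.mem_insert_iff, Set.mem_singleton_iff, Prod.mk.injEq] at h1
  rcases h1 with ⟨e1,e2⟩|⟨e1,e2⟩|⟨e1,e2⟩|⟨e1,e2⟩ <;>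
    first
      | exact absurd e2 (by decide)
      | exact wr_one_ne hn (by linear_combination e1)
      | exact wr_one_ne hn (by linear_combination -e1)
      | exact wr_two_ne hn (by linear_combination e1)
      | exact wr_two_ne hn (by linear_combination -e1)

lemma SB_ne_jj (hn : 4 < n) (j : ZMod n) (s t s' t' : Fin 2) :
    SB hn j s t ≠ SB hn (j-1) s' t' := by
  intro h
  have h1 : (j+2,t) ∈ (SB hn (j-1) s' t').verts := by rw [← h, SB_verts]; simp
  rw [SB_verts] at h1
  simp only [Set.mem_insert_iff, Set.mem_singleton_iff, Prod.mk.injEq] at h1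
  rcases h1 with ⟨e1,-⟩|⟨e1,-⟩|⟨e1,-⟩|⟨e1,-⟩ <;>
    first
      | exact wr_one_ne hn (by linear_combination e1)
      | exact wr_one_ne hn (by linear_combination -e1)
      | exact wr_two_ne hn (by linear_combination e1)
      | exact wr_two_ne hn (by linear_combination -e1)
      | exact wr_three_ne hn (by linear_combination e1)
      | exact wr_three_ne hn (by linear_combination -e1)

lemma wr_set_eq (hn : 4 < n) (i : ZMod n) (a b : Fin 2) :
    {C ∈ cycleSubgraphs (wreathGraph n) 4 | s((i,a),(i+1,b)) ∈ C.edgeSet} =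
      {SA hn i, SB hn i a 0, SB hn i a 1, SB hn (i-1) 0 b, SB hn (i-1) 1 b} := by
  ext C
  simp only [Set.mem_setOf_eq, Set.mem_insert_iff, Set.mem_singleton_iff]
  constructor
  · rintro ⟨hC, he⟩
    rcases wr_classify hn hC with ⟨j, rfl⟩ | ⟨j, s, t, rfl⟩
    · rw [SA_edge] at he
      simp only [Sym2.eq_iff, Prod.mk.injEq] at he
      rcases he with (⟨⟨e1,-⟩,e3,-⟩|⟨⟨e1,-⟩,e3,-⟩)|(⟨⟨e1,-⟩,e3,-⟩|⟨⟨e1,-⟩,e3,-⟩)|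
        (⟨⟨e1,-⟩,e3,-⟩|⟨⟨e1,-⟩,e3,-⟩)|(⟨⟨e1,-⟩,e3,-⟩|⟨⟨e1,-⟩,e3,-⟩) <;>
        first
          | exact absurd (show (2:ZMod n) = 0 by linear_combination e3 - e1) (wr_two_ne hn)
          | (refine Or.inl ?_; rw [e1])
    · rw [SB_edge] at he
      simp only [Sym2.eq_iff, Prod.mk.injEq] at he
      rcases he with (⟨⟨e1,e2⟩,e3,e4⟩|⟨⟨e1,e2⟩,e3,e4⟩)|(⟨⟨e1,e2⟩,e3,e4⟩|⟨⟨e1,e2⟩,e3,e4⟩)|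
        (⟨⟨e1,e2⟩,e3,e4⟩|⟨⟨e1,e2⟩,e3,e4⟩)|(⟨⟨e1,e2⟩,e3,e4⟩|⟨⟨e1,e2⟩,e3,e4⟩) <;>
        first
          | exact absurd (show (2:ZMod n) = 0 by linear_combination e3 - e1) (wr_two_ne hn)
          | (rcases fin2 t with rfl|rfl
             · refine Or.inr (Or.inl ?_); rw [e1, e2]
             · refine Or.inr (Or.inr (Or.inl ?_)); rw [e1, e2])
          | (have hj : j = i - 1 := by linear_combination -e1
             rcases fin2 s with rfl|rfl
             · refine Or.inr (Or.inr (Or.inr (Or.inl ?_))); rw [hj, e4]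
             · refine Or.inr (Or.inr (Or.inr (Or.inr ?_))); rw [hj, e4])
  · have r1 : i - 1 + 1 = i := by ring
    have r2 : i - 1 + 2 = i + 1 := by ring
    rintro (rfl|rfl|rfl|rfl|rfl)
    · exact ⟨SA_mem hn i, by
        rw [SA_edge]
        rcases fin2 a with rfl|rfl <;> rcases fin2 b with rfl|rfl <;> simp [Sym2.eq_iff]⟩
    · exact ⟨SB_mem hn i a 0, by
        rw [SB_edge]
        rcases fin2 b with rfl|rfl <;> simp [Sym2.eq_iff]⟩
    · exact ⟨SB_mem hn i a 1, by
        rw [SB_edge]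
        rcases fin2 b with rfl|rfl <;> simp [Sym2.eq_iff]⟩
    · exact ⟨SB_mem hn (i-1) 0 b, by
        rw [SB_edge, r1, r2]
        rcases fin2 a with rfl|rfl <;> simp [Sym2.eq_iff]⟩
    · exact ⟨SB_mem hn (i-1) 1 b, by
        rw [SB_edge, r1, r2]
        rcases fin2 a with rfl|rfl <;> simp [Sym2.eq_iff]⟩

lemma wr_count (hn : 4 < n) (i : ZMod n) (a b : Fin 2) :
    {C ∈ cycleSubgraphs (wreathGraph n) 4 | s((i,a),(i+1,b)) ∈ C.edgeSet}.ncard = 5 := by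
  rw [wr_set_eq hn i a b]
  rw [Set.ncard_insert_of_notMem (by
      simp only [Set.mem_insert_iff, Set.mem_singleton_iff]
      push_neg
      exact ⟨SA_ne_SB hn i i a 0, SA_ne_SB hn i i a 1, SA_ne_SB hn i (i-1) 0 b,
        SA_ne_SB hn i (i-1) 1 b⟩)
    ((Set.finite_singleton _).insert _ |>.insert _ |>.insert _)]
  rw [Set.ncard_insert_of_notMem (by
      simp only [Set.mem_insert_iff, Set.mem_singleton_iff]
      push_neg
      exact ⟨SB_ne_tt hn i a, SB_ne_jj hn i a 0 0 b, SB_ne_jj hn i a 0 1 b⟩)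
    ((Set.finite_singleton _).insert _ |>.insert _)]
  rw [Set.ncard_insert_of_notMem (by
      simp only [Set.mem_insert_iff, Set.mem_singleton_iff]
      push_neg
      exact ⟨SB_ne_jj hn i a 1 0 b, SB_ne_jj hn i a 1 1 b⟩)
    ((Set.finite_singleton _).insert _)]
  rw [Set.ncard_insert_of_notMem (by
      simp only [Set.mem_singleton_iff]
      exact SB_ne_ss hn (i-1) b b) (Set.finite_singleton _)]
  rw [Set.ncard_singleton]

lemma wr_no_tri (hn : 4 < n) {v : ZMod n × Fin 2} (w : (wreathGraph n).Walk v v)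
    (hcyc : w.IsCycle) : w.length ≠ 3 := by
  intro hlen
  obtain ⟨j0, x0⟩ := v
  cases w with
  | nil => simp at hlen
  | cons h1 w =>
  rename_i v1
  obtain ⟨j1, x1⟩ := v1
  cases w with
  | nil => simp at hlen
  | cons h2 w =>
  rename_i v2
  obtain ⟨j2, x2⟩ := v2
  cases w with
  | nil => simp at hlen
  | cons h3 w =>
  cases w with
  | cons h4 w => simp only [Walk.length_cons] at hlen; omega
  | nil =>
  rcases (wr_adj_iff hn).1 h1 with f1|f1 <;> dsimp only at f1 <;>
  rcases (wr_adj_iff hn).1 h2 with f2|f2 <;> dsimp only at f2 <;>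
  rcases (wr_adj_iff hn).1 h3 with f3|f3 <;> dsimp only at f3 <;>
  first
    | exact absurd (show (3:ZMod n) = 0 by linear_combination f1+f2+f3) (wr_three_ne hn)
    | exact absurd (show (1:ZMod n) = 0 by linear_combination f1+f2-f3) (wr_one_ne hn)
    | exact absurd (show (1:ZMod n) = 0 by linear_combination f1-f2+f3) (wr_one_ne hn)
    | exact absurd (show (1:ZMod n) = 0 by linear_combination -f1+f2+f3) (wr_one_ne hn)

lemma wr_girth (hn : 4 < n) : (wreathGraph n).girth = 4 := by
  have hle : (wreathGraph n).egirth ≤ 4 := by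
    have hc := cyc4_isCycle (G := wreathGraph n)
      (a := ((0:ZMod n),(0:Fin 2))) (b := ((0:ZMod n)+1,0)) (c := ((0:ZMod n),1))
      (d := ((0:ZMod n)+1,1)) (wadj hn rfl) (wadj' hn rfl) (wadj hn rfl) (wadj' hn rfl)
      (by intro hq; exact absurd (congrArg Prod.snd hq) (show ¬(0:Fin 2) = 1 by decide))
      (by intro hq; exact absurd (congrArg Prod.snd hq) (show ¬(0:Fin 2) = 1 by decide))
    calc (wreathGraph n).egirth ≤ ((cyc4 _ _ _ _).length : ℕ∞) :=
          iInf_le_of_le _ (iInf_le_of_le _ (iInf_le _ hc))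
      _ = 4 := by rw [cyc4_len]; rfl
  have hge : 4 ≤ (wreathGraph n).egirth := by
    rw [le_egirth]
    intro a w hw
    have h3 := hw.three_le_length
    have hne := wr_no_tri hn w hw
    have : 4 ≤ w.length := by omega
    exact_mod_cast this
  have : (wreathGraph n).egirth = 4 := le_antisymm hle hge
  rw [girth, this]
  rfl

end Aux

/-- For `n > 4`, the wreath graph `W(n,2)` has girth 4 and every edge lies on exactly 5
four-cycles: it is girth-regular with signature `(5,5,5,5)`. -/
theorem wreath_signature_5555 (n : ℕ) (hn : 4 < n) :
    (wreathGraph n).girth = 4 ∧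
    ∀ e ∈ (wreathGraph n).edgeSet,
      {C ∈ cycleSubgraphs (wreathGraph n) 4 | e ∈ C.edgeSet}.ncard = 5 := by
  refine ⟨wr_girth hn, ?_⟩
  intro e
  induction e with
  | _ u v =>
  intro he
  rcases (wr_adj_iff hn).1 ((wreathGraph n).mem_edgeSet.1 he) with h|h
  · obtain ⟨i, a⟩ := u
    obtain ⟨jv, b⟩ := v
    dsimp only at h
    subst h
    exact wr_count hn i a b
  · rw [Sym2.eq_swap]
    obtain ⟨i, a⟩ := v
    obtain ⟨jv, b⟩ := u
    dsimp only at h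
    subst h
    exact wr_count hn i a b
end
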